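/- arXiv:1902.07241 — 5 statements merged into one kernel-verified Lean document; each statement's English description precedes it below -/
import Mathlib

section
/- For every n ≥ 1, the directed path on n vertices has dominator chromatic number exactly n. -/
/-- `c` is a dominator coloring of the digraph with arc relation `A`: a proper coloring of
the underlying undirected graph such that every vertex with at least one out-neighbor
dominates some (nonempty) color class. -/
def IsDominatorColoring {V : Type*} (A : V → V → Prop) {k : ℕ} (c : V → Fin k) : Prop :=
  (∀ u v, A u v → c u ≠ c v) ∧
    ∀ v, (∃ u, A v u) → ∃ i : Fin k, (∃ u, c u = i) ∧ ∀ u, c u = i → A v u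

/-- The dominator chromatic number of a digraph: the least number of colors in a
dominator coloring. -/
noncomputable def domChrom {V : Type*} (A : V → V → Prop) : ℕ :=
  sInf {k | ∃ c : V → Fin k, IsDominatorColoring A c}

/-- `A` is an orientation of the simple graph `G`. -/
def IsOrientation {V : Type*} (G : SimpleGraph V) (A : V → V → Prop) : Prop :=
  ∀ u v, (G.Adj u v ↔ (A u v ∨ A v u)) ∧ ¬(A u v ∧ A v u)

/-- The minimum dominator chromatic number over all orientations of `G`. -/
noncomputable def minOrientDomChrom {V : Type*} (G : SimpleGraph V) : ℕ :=
  sInf {k | ∃ A : V → V → Prop, IsOrientation G A ∧ ∃ c : V → Fin k, IsDominatorColoring A c}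

/-!
Colouring each vertex of the path by its own colour is a dominator colouring. Conversely,
`v_i` (for `i < n`) has `v_{i+1}` as its only out-neighbour, so the colour class it dominates
must be `{v_{i+1}}`; every vertex other than `v_1` is therefore alone in its colour class, which
forces all `n` colours to be distinct.
-/

section

variable {V : Type*} {A : V → V → Prop}

theorem isDominatorColoring_of_injective (hA : ∀ v, ¬A v v) {k : ℕ} {c : V → Fin k}
    (hc : Function.Injective c) : IsDominatorColoring A c := by
  refine ⟨fun u v huv hcuv => hA u (hc hcuv ▸ huv), ?_⟩
  rintro v ⟨u, hvu⟩
  exact ⟨c u, ⟨u, rfl⟩, fun w hw => hc hw ▸ hvu⟩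

theorem domChrom_le_of_isDominatorColoring {k : ℕ} {c : V → Fin k}
    (hc : IsDominatorColoring A c) : domChrom A ≤ k :=
  Nat.sInf_le ⟨c, hc⟩

theorem domChrom_le_card [Fintype V] (hA : ∀ v, ¬A v v) : domChrom A ≤ Fintype.card V :=
  domChrom_le_of_isDominatorColoring
    (isDominatorColoring_of_injective hA (Fintype.equivFin V).injective)

theorem card_le_domChrom [Fintype V] (hA : ∀ v, ¬A v v)
    (hinj : ∀ {k : ℕ} (c : V → Fin k), IsDominatorColoring A c → Function.Injective c) :
    Fintype.card V ≤ domChrom A := by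
  obtain ⟨c, hc⟩ : ∃ c : V → Fin (domChrom A), IsDominatorColoring A c :=
    Nat.sInf_mem (s := {k | ∃ c : V → Fin k, IsDominatorColoring A c})
      ⟨_, _, isDominatorColoring_of_injective hA (Fintype.equivFin V).injective⟩
  simpa using Fintype.card_le_of_injective c (hinj c hc)

theorem IsDominatorColoring.eq_of_apply_eq_of_unique_outNeighbor {k : ℕ} {c : V → Fin k}
    (hc : IsDominatorColoring A c) {u v : V} (huv : A u v) (huniq : ∀ w, A u w → w = v)
    {w : V} (hw : c w = c v) : w = v := by
  obtain ⟨i, ⟨x, rfl⟩, hdom⟩ := hc.2 u ⟨v, huv⟩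
  obtain rfl : x = v := huniq x (hdom x rfl)
  exact huniq w (hdom w hw)

end

theorem IsDominatorColoring.injective_of_directedPath {n k : ℕ} {c : Fin n → Fin k}
    (hc : IsDominatorColoring (fun i j : Fin n => (i : ℕ) + 1 = (j : ℕ)) c) :
    Function.Injective c := by
  intro a b hab
  wlog hle : a ≤ b generalizing a b
  · exact (this hab.symm (le_of_not_ge hle)).symm
  rcases Nat.eq_zero_or_pos (b : ℕ) with hb | hb
  · exact Fin.ext (by omega)
  let u : Fin n := ⟨b - 1, by omega⟩
  exact hc.eq_of_apply_eq_of_unique_outNeighbor (u := u) (by simp only [u]; omega)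
    (fun w hw => Fin.ext (by simp only [u] at hw; omega)) hab

theorem domChrom_directedPath_general (n : ℕ) :
    domChrom (fun i j : Fin n => (i : ℕ) + 1 = (j : ℕ)) = n := by
  have hirrefl : ∀ v : Fin n, ¬((v : ℕ) + 1 = (v : ℕ)) := fun v => by omega
  refine le_antisymm ((domChrom_le_card hirrefl).trans_eq (Fintype.card_fin n)) ?_
  exact (Fintype.card_fin n).symm.trans_le
    (card_le_domChrom hirrefl fun c hc => hc.injective_of_directedPath)

/-- For every `n ≥ 1`, the directed path on `n` vertices (arcs
`v_i → v_{i+1}`) has dominator chromatic number exactly `n`. -/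
theorem domChrom_directedPath (n : ℕ) (hn : 1 ≤ n) :
    domChrom (fun i j : Fin n => (i : ℕ) + 1 = (j : ℕ)) = n :=
  domChrom_directedPath_general n
end

section
/- For every n ≥ 3, the directed cycle on n vertices has dominator chromatic number exactly n. -/
/-!
The arcs of the directed cycle form the graph of the rotation `i ↦ i + 1`, a fixed-point-free
bijection `f`. In the graph of a function, a vertex `v` dominates exactly the colour class
`{f v}`, so when `f` is surjective every colour class is a singleton and a dominator colouring
must be injective. Conversely, an injective colouring of a loopless digraph is a dominator
colouring, each vertex dominating the singleton class of any of its out-neighbours.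
-/

open Function

section DominatorColoring

variable {V : Type*} {k : ℕ}

theorem IsDominatorColoring.of_injective {A : V → V → Prop} (hA : ∀ v, ¬A v v)
    {c : V → Fin k} (hc : Injective c) : IsDominatorColoring A c := by
  refine ⟨fun u v huv hcuv => hA u (hc hcuv ▸ huv), fun v ⟨u, hvu⟩ => ?_⟩
  exact ⟨c u, ⟨u, rfl⟩, fun w hw => hc hw ▸ hvu⟩

theorem IsDominatorColoring.injective_of_surjective {f : V → V} (hf : Surjective f)
    {c : V → Fin k} (hc : IsDominatorColoring (fun v u => f v = u) c) : Injective c := by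
  intro a b hab
  obtain ⟨v, rfl⟩ := hf a
  obtain ⟨i, ⟨u, hu⟩, hdom⟩ := hc.2 v ⟨f v, rfl⟩
  have hfv : c (f v) = i := hdom u hu ▸ hu
  exact hdom b (hab ▸ hfv)

theorem domChrom_eq_card_of_surjective [Fintype V] {f : V → V} (hf : Surjective f)
    (hfix : ∀ v, f v ≠ v) : domChrom (fun v u => f v = u) = Fintype.card V := by
  have hcol := IsDominatorColoring.of_injective (A := fun v u => f v = u) hfix
    (Fintype.equivFin V).injective
  refine le_antisymm (Nat.sInf_le ⟨_, hcol⟩) (le_csInf ⟨_, _, hcol⟩ ?_)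
  rintro k ⟨c, hc⟩
  simpa using Fintype.card_le_of_injective c (hc.injective_of_surjective hf)

end DominatorColoring

theorem val_finRotate {n : ℕ} (i : Fin n) : (finRotate n i : ℕ) = ((i : ℕ) + 1) % n := by
  have := i.neZero
  rw [finRotate_apply, Fin.val_add, Fin.val_one', Nat.add_mod_mod]

/-- For every `n ≥ 3`, the directed cycle on `n` vertices (arcs
`v_i → v_{i+1}` together with `v_n → v_1`) has dominator chromatic number exactly `n`. -/
theorem domChrom_directedCycle (n : ℕ) (hn : 3 ≤ n) :
    domChrom (fun i j : Fin n => ((i : ℕ) + 1) % n = (j : ℕ)) = n := by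
  have harcs :
      (fun i j : Fin n => ((i : ℕ) + 1) % n = (j : ℕ)) = fun i j => finRotate n i = j := by
    ext i j
    rw [Fin.ext_iff, val_finRotate]
  have hfix : ∀ i, finRotate n i ≠ i := fun i =>
    Equiv.Perm.mem_support.mp (support_finRotate_of_le (by omega : 2 ≤ n) ▸ Finset.mem_univ i)
  rw [harcs, domChrom_eq_card_of_surjective (finRotate n).surjective hfix, Fintype.card_fin]
end

section
/- The minimum, over all orientations of the path P_4 on 4 vertices, of the dominator chromatic number equals 3, while the minimum, over all orientations of the cycle C_4 on 4 vertices, of the dominator chromatic number equals 2. Consequently, it is not true in general that a subgraph has dominator chromatic number at most that of a graph containing it: P_4 is a subgraph of C_4 yet χ_d(P_4) = 3 > 2 = χ_d(C_4). -/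
/-!
A proper colouring of an oriented graph with two colours leaves each vertex only one class it
could dominate, the one not containing it, so every vertex with an out-neighbour has arcs to all
vertices of the other colour. In a proper 2-colouring of `P₄` each end vertex has a
non-neighbour of the other colour, so it is a sink; hence both inner vertices have out-neighbours
and each must send an arc to the other, which no orientation allows. Three colours suffice for
`1 → 0, 1 → 2, 2 → 3`, and two for `C₄` oriented from the vertices `0, 2` towards `1, 3`.
-/

open SimpleGraph

variable {V : Type*} {G : SimpleGraph V} {A : V → V → Prop} {k : ℕ} {c : V → Fin k}

namespace IsOrientation

theorem arc_or_arc (hA : IsOrientation G A) {u v : V} (h : G.Adj u v) : A u v ∨ A v u :=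
  ((hA u v).1).mp h

theorem adj_of_arc (hA : IsOrientation G A) {u v : V} (h : A u v) : G.Adj u v :=
  ((hA u v).1).mpr (Or.inl h)

theorem not_arc_and_arc (hA : IsOrientation G A) (u v : V) : ¬(A u v ∧ A v u) :=
  (hA u v).2

end IsOrientation

theorem Fin.two_eq_of_ne_of_ne {a b c : Fin 2} (ha : a ≠ c) (hb : b ≠ c) : a = b := by
  omega

namespace IsDominatorColoring

theorem ne_of_adj (hA : IsOrientation G A) (hc : IsDominatorColoring A c) {u v : V}
    (h : G.Adj u v) : c u ≠ c v := by
  rcases hA.arc_or_arc h with huv | hvu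
  · exact hc.1 u v huv
  · exact (hc.1 v u hvu).symm

theorem two_le_of_adj (hA : IsOrientation G A) (hc : IsDominatorColoring A c) {u v : V}
    (h : G.Adj u v) : 2 ≤ k := by
  by_contra! hk
  have : Subsingleton (Fin k) := Fin.subsingleton_iff_le_one.mpr (by omega)
  exact hc.ne_of_adj hA h (Subsingleton.elim _ _)

theorem arc_of_ne {c : V → Fin 2} (hc : IsDominatorColoring A c) {v w : V} (hv : ∃ u, A v u)
    (hw : c w ≠ c v) : A v w := by
  obtain ⟨i, -, hi⟩ := hc.2 v hv
  have hiv : i ≠ c v := fun h => hc.1 v v (hi v h.symm) rfl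
  exact hi w (Fin.two_eq_of_ne_of_ne hw hiv)

theorem arc_of_pendant {c : V → Fin 2} (hA : IsOrientation G A) (hc : IsDominatorColoring A c)
    {l m w x : V} (hlm : G.Adj l m) (hw : c w ≠ c l) (hlw : ¬G.Adj l w) (hx : c x ≠ c m) :
    A m x := by
  rcases hA.arc_or_arc hlm with hl | hm
  · exact absurd (hA.adj_of_arc (hc.arc_of_ne ⟨m, hl⟩ hw)) hlw
  · exact hc.arc_of_ne ⟨l, hm⟩ hx

end IsDominatorColoring

theorem minOrientDomChrom_eq_of_forall_le {n : ℕ} {c : V → Fin n} (hA : IsOrientation G A)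
    (hc : IsDominatorColoring A c)
    (hmin : ∀ (A : V → V → Prop) (k : ℕ) (c : V → Fin k),
      IsOrientation G A → IsDominatorColoring A c → n ≤ k) :
    minOrientDomChrom G = n :=
  le_antisymm (Nat.sInf_le ⟨A, hA, c, hc⟩)
    (le_csInf ⟨n, A, hA, c, hc⟩ fun _ ⟨A', hA', c', hc'⟩ => hmin A' _ c' hA' hc')

theorem pathGraph_four_not_isDominatorColoring_two {A : Fin 4 → Fin 4 → Prop}
    (hA : IsOrientation (pathGraph 4) A) (c : Fin 4 → Fin 2) : ¬IsDominatorColoring A c := by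
  intro hc
  have adj01 : (pathGraph 4).Adj 0 1 := by simp [pathGraph_adj]
  have adj12 : (pathGraph 4).Adj 1 2 := by simp [pathGraph_adj]
  have adj32 : (pathGraph 4).Adj 3 2 := by simp [pathGraph_adj]
  have h12 := hc.ne_of_adj hA adj12
  have h03 : c 0 ≠ c 3 := by
    rw [Fin.two_eq_of_ne_of_ne (hc.ne_of_adj hA adj01) h12.symm]
    exact (hc.ne_of_adj hA adj32).symm
  have not_adj_03 : ¬(pathGraph 4).Adj 0 3 := by simp [pathGraph_adj]
  exact hA.not_arc_and_arc 1 2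
    ⟨hc.arc_of_pendant hA adj01 h03.symm not_adj_03 h12.symm,
      hc.arc_of_pendant hA adj32 h03 (fun h => not_adj_03 h.symm) h12⟩

theorem isOrientation_pathGraph_four :
    IsOrientation (pathGraph 4) fun u v =>
      (u = 1 ∧ v = 0) ∨ (u = 1 ∧ v = 2) ∨ (u = 2 ∧ v = 3) := by
  intro u v
  rw [pathGraph_adj]
  fin_cases u <;> fin_cases v <;> simp

theorem isOrientation_cycleGraph_four :
    IsOrientation (cycleGraph 4) fun u v => (u = 0 ∨ u = 2) ∧ (v = 1 ∨ v = 3) := by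
  intro u v
  rw [cycleGraph_adj]
  fin_cases u <;> fin_cases v <;> decide

theorem minOrientDomChrom_pathGraph_four : minOrientDomChrom (pathGraph 4) = 3 := by
  refine minOrientDomChrom_eq_of_forall_le isOrientation_pathGraph_four (c := ![0, 1, 0, 2])
    (by unfold IsDominatorColoring; decide) fun A k c hA hc => ?_
  have h2 := hc.two_le_of_adj hA (u := 0) (v := 1) (by simp [pathGraph_adj])
  by_contra! hk
  obtain rfl : k = 2 := by omega
  exact pathGraph_four_not_isDominatorColoring_two hA c hc

theorem minOrientDomChrom_cycleGraph_four : minOrientDomChrom (cycleGraph 4) = 2 :=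
  minOrientDomChrom_eq_of_forall_le isOrientation_cycleGraph_four (c := ![0, 1, 0, 1])
    (by unfold IsDominatorColoring; decide) fun _ _ _ hA hc =>
      hc.two_le_of_adj hA (u := 0) (v := 1) (by simp [cycleGraph_adj])

/-- The minimum dominator chromatic number over all orientations of `P₄`
equals `3`, while that of `C₄` equals `2`; consequently `P₄` is a subgraph of `C₄` with
`χ_d(P₄) = 3 > 2 = χ_d(C₄)`. -/
theorem domChrom_P4_gt_C4 :
    minOrientDomChrom (SimpleGraph.pathGraph 4) = 3 ∧
    minOrientDomChrom (SimpleGraph.cycleGraph 4) = 2 ∧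
    SimpleGraph.pathGraph 4 ≤ SimpleGraph.cycleGraph 4 ∧
    minOrientDomChrom (SimpleGraph.cycleGraph 4) <
      minOrientDomChrom (SimpleGraph.pathGraph 4) := by
  refine ⟨minOrientDomChrom_pathGraph_four, minOrientDomChrom_cycleGraph_four,
    pathGraph_le_cycleGraph, ?_⟩
  rw [minOrientDomChrom_pathGraph_four, minOrientDomChrom_cycleGraph_four]
  decide
end

section
/- For every k ≥ 1, the minimum dominator chromatic number over all orientations of the path P_n on n vertices satisfies: χ_d(P_n) = k+2 if n = 4k; χ_d(P_n) = k+2 if n = 4k+1; χ_d(P_n) = k+3 if n = 4k+2; and χ_d(P_n) = k+3 if n = 4k+3; with the single exception χ_d(P_6) = 3. -/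
/-!
For the upper bound, orient every edge of the path from its odd to its even end. Besides one
color for the odd and one for the even vertices, it then suffices to single out one even vertex
in every block of four, which the two odd vertices around it dominate.

The lower bound is a counting argument. Every non-sink dominates a color class; in a path a
dominated class has one vertex and at most two dominators, or two vertices and exactly one
dominator, so `#non-sinks + #(dominated vertices) ≤ 3 * #(dominated classes)`. The sinks are
independent, hence at most `(n + 1) / 2` of them. A source lies in no dominated class, so the
remaining vertices need at least one more color; if they all share a single color they form an
independent set containing a vertex outside the independent set of sinks, and two such sets of
a path together have at most `n` vertices. These inequalities leave `n = 6` as the only exception.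
-/

open Finset SimpleGraph

section PathGraph

variable {n : ℕ}

theorem pathGraph_card_le_two_of_forall_adj (v : Fin n) {s : Finset (Fin n)}
    (hs : ∀ w ∈ s, (pathGraph n).Adj v w) : #s ≤ 2 := by
  by_contra! h
  obtain ⟨a, b, c, ha, hb, hc, hab, hac, hbc⟩ := two_lt_card_iff.mp h
  have := pathGraph_adj.mp (hs a ha)
  have := pathGraph_adj.mp (hs b hb)
  have := pathGraph_adj.mp (hs c hc)
  omega

/-- A path contains neither `K_{1,3}` nor `K_{2,2}`. -/
theorem pathGraph_card_add_card_le_three {s t : Finset (Fin n)} (hs : s.Nonempty)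
    (ht : t.Nonempty) (hst : ∀ v ∈ s, ∀ w ∈ t, (pathGraph n).Adj v w) : #s + #t ≤ 3 := by
  obtain ⟨v, hv⟩ := hs
  obtain ⟨w, hw⟩ := ht
  have hs2 : #s ≤ 2 :=
    pathGraph_card_le_two_of_forall_adj w fun u hu => (hst u hu w hw).symm
  have ht2 : #t ≤ 2 := pathGraph_card_le_two_of_forall_adj v (hst v hv)
  by_contra! h
  obtain ⟨a, ha, b, hb, hab⟩ := one_lt_card.mp (by omega : 1 < #s)
  obtain ⟨x, hx, y, hy, hxy⟩ := one_lt_card.mp (by omega : 1 < #t)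
  have := pathGraph_adj.mp (hst a ha x hx)
  have := pathGraph_adj.mp (hst a ha y hy)
  have := pathGraph_adj.mp (hst b hb x hx)
  have := pathGraph_adj.mp (hst b hb y hy)
  omega

theorem pathGraph_eq_of_isIndepSet {s : Set (Fin n)} (hs : (pathGraph n).IsIndepSet s)
    {v w : Fin n} (hv : v ∈ s) (hw : w ∈ s) (hvw : v.val ≤ w.val + 1) (hwv : w.val ≤ v.val + 1) :
    v = w := by
  by_contra hne
  exact hs hv hw hne (pathGraph_adj.mpr (by omega))

theorem pathGraph_two_mul_card_le_of_isIndepSet {s : Finset (Fin n)}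
    (hs : (pathGraph n).IsIndepSet s) : 2 * #s ≤ n + 1 := by
  have h := card_le_card_of_injOn (fun v : Fin n => v.val / 2) (t := range ((n + 1) / 2))
    (fun v _ => by simp only [coe_range, Set.mem_Iio]; omega)
    (fun v hv w hw hvw => by
      simp only at hvw
      exact pathGraph_eq_of_isIndepSet hs hv hw (by omega) (by omega))
  simp only [card_range] at h
  omega

/-- Independent sets of size `(n + 1) / 2` in a path consist exactly of the even vertices. -/
theorem pathGraph_two_mul_card_le_of_isIndepSet_of_parity {s : Finset (Fin n)}
    (hs : (pathGraph n).IsIndepSet s) (w : Fin n) (hw : w ∈ s ↔ w.val % 2 = 1) :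
    2 * #s ≤ n := by
  have below : ∀ v ∈ s, v.val ≤ w.val → v.val / 2 < (w.val + 1) / 2 := by
    intro v hv hvw
    rcases eq_or_ne v w with rfl | hne
    · have := hw.mp hv; omega
    · have := Fin.val_ne_of_ne hne; omega
  have above : ∀ v ∈ s, w.val < v.val → (w.val + 1) / 2 ≤ (v.val - 1) / 2 := by
    intro v hv hwv
    by_cases hsucc : v.val = w.val + 1
    · have hw' : w ∉ s := fun hws =>
        absurd (pathGraph_eq_of_isIndepSet hs hv hws (by omega) (by omega))
          (Fin.ne_of_val_ne (by omega))
      have := (not_congr hw).mp hw'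
      omega
    · omega
  let f : Fin n → ℕ := fun v => if v.val ≤ w.val then v.val / 2 else (v.val - 1) / 2
  have h := card_le_card_of_injOn f (t := range (n / 2))
    (fun v hv => by
      have := below v hv; have := above v hv
      simp only [f, coe_range, Set.mem_Iio]; split_ifs <;> omega)
    (fun v hv w' hw' hvw => by
      have := below v hv; have := above v hv; have := below w' hw'; have := above w' hw'
      simp only [f] at hvw
      split_ifs at hvw <;> exact pathGraph_eq_of_isIndepSet hs hv hw' (by omega) (by omega))
  simp only [card_range] at h
  omega

theorem pathGraph_card_add_card_le_of_isIndepSet {s t : Finset (Fin n)}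
    (hs : (pathGraph n).IsIndepSet s) (ht : (pathGraph n).IsIndepSet t) {w : Fin n}
    (hws : w ∈ s) (hwt : w ∉ t) : #s + #t ≤ n := by
  have := pathGraph_two_mul_card_le_of_isIndepSet hs
  have := pathGraph_two_mul_card_le_of_isIndepSet ht
  rcases Nat.mod_two_eq_zero_or_one w.val with h | h
  · have := pathGraph_two_mul_card_le_of_isIndepSet_of_parity ht w (by simp [hwt, h])
    omega
  · have := pathGraph_two_mul_card_le_of_isIndepSet_of_parity hs w (by simp [hws, h])
    omega

end PathGraph

section DominatorColoring

variable {V : Type*} [Fintype V] (A : V → V → Prop) {t : ℕ} (c : V → Fin t)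

def colorClass (i : Fin t) : Finset V := {v | c v = i}

variable {c} in
theorem mem_colorClass {i : Fin t} {v : V} : v ∈ colorClass c i ↔ c v = i := by
  simp [colorClass]

variable {A c} in
theorem colorClass_isIndepSet {G : SimpleGraph V} (hA : IsOrientation G A)
    (hc : IsDominatorColoring A c) (i : Fin t) : G.IsIndepSet (colorClass c i : Set V) := by
  intro u hu v hv _ huv
  rw [mem_coe, mem_colorClass] at hu hv
  rcases (hA u v).1.mp huv with h | h
  · exact hc.1 u v h (hu.trans hv.symm)
  · exact hc.1 v u h (hv.trans hu.symm)

variable [DecidableRel A]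

def sinks : Finset V := {v | ∀ u, ¬A v u}

def dominators (s : Finset V) : Finset V := {v | ∀ u ∈ s, A v u}

def dominatedColors : Finset (Fin t) :=
  {i | (colorClass c i).Nonempty ∧ (dominators A (colorClass c i)).Nonempty}

def undominatedVertices : Finset V := {v | c v ∉ dominatedColors A c}

variable {A c}

theorem mem_sinks {v : V} : v ∈ sinks A ↔ ∀ u, ¬A v u := by
  simp [sinks]

theorem mem_dominators {s : Finset V} {v : V} : v ∈ dominators A s ↔ ∀ u ∈ s, A v u := by
  simp [dominators]

theorem sinks_isIndepSet {G : SimpleGraph V} (hA : IsOrientation G A) :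
    G.IsIndepSet (sinks A : Set V) := by
  intro u hu v hv _ huv
  rw [mem_coe, mem_sinks] at hu hv
  rcases (hA u v).1.mp huv with h | h
  · exact hu v h
  · exact hv u h

theorem compl_sinks_subset_biUnion_dominators [DecidableEq V] (hc : IsDominatorColoring A c) :
    (sinks A)ᶜ ⊆ (dominatedColors A c).biUnion fun i => dominators A (colorClass c i) := by
  intro v hv
  simp only [mem_compl, mem_sinks, not_forall, not_not] at hv
  obtain ⟨i, ⟨u, hu⟩, hvi⟩ := hc.2 v hv
  have hv_dom : v ∈ dominators A (colorClass c i) :=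
    mem_dominators.mpr fun u hu => hvi u (mem_colorClass.mp hu)
  refine mem_biUnion.mpr ⟨i, ?_, hv_dom⟩
  simp only [dominatedColors, mem_filter, mem_univ, true_and]
  exact ⟨⟨u, mem_colorClass.mpr hu⟩, ⟨v, hv_dom⟩⟩

theorem card_undominatedVertices_add_sum_card_colorClass :
    #(undominatedVertices A c) + ∑ i ∈ dominatedColors A c, #(colorClass c i) =
      Fintype.card V := by
  simp only [colorClass, undominatedVertices]
  rw [sum_card_fiberwise_eq_card_filter, add_comm, card_filter_add_card_filter_not, card_univ]

theorem mem_undominatedVertices_of_forall_not_adj {v : V} (hv : ∀ u, ¬A u v) :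
    v ∈ undominatedVertices A c := by
  simp only [undominatedVertices, dominatedColors, mem_filter, mem_univ, true_and, not_and]
  rintro - ⟨u, hu⟩
  exact hv u (mem_dominators.mp hu v (mem_colorClass.mpr rfl))

theorem card_dominatedColors_add_card_image_le :
    #(dominatedColors A c) + #((undominatedVertices A c).image c) ≤ t := by
  rw [← card_union_of_disjoint]
  · exact (card_le_univ _).trans_eq (Fintype.card_fin t)
  · rw [disjoint_right]
    intro i hi
    obtain ⟨v, hv, rfl⟩ := mem_image.mp hi
    simpa [undominatedVertices] using hv

end DominatorColoring

section PathLowerBound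

variable {n t : ℕ} {A : Fin n → Fin n → Prop} {c : Fin n → Fin t}

theorem exists_source_of_isOrientation_pathGraph (hA : IsOrientation (pathGraph n) A)
    (hn : 2 ≤ n) : ∃ w, (∀ u, ¬A u w) ∧ ∃ u, A w u := by
  classical
  have adj_of_arc : ∀ {u v}, A u v → u.val + 1 = v.val ∨ v.val + 1 = u.val := fun h =>
    pathGraph_adj.mp ((hA _ _).1.mpr (Or.inl h))
  by_contra! H
  have has_in : ∀ w u, A w u → ∃ x, A x w := fun w u hwu => by
    by_contra! h
    exact H w h u hwu
  -- The leftmost vertex `m` entered from its left neighbour `u` is impossible: `u` is not a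
  -- sink, so it is entered too, either from `m` or from the left.
  let S : Finset (Fin n) := {v | ∃ u, u.val + 1 = v.val ∧ A u v}
  have hS : S.Nonempty := by
    let last : Fin n := ⟨n - 1, by omega⟩
    let prev : Fin n := ⟨n - 2, by omega⟩
    have : ∃ x, A x last := by
      rcases (hA prev last).1.mp (pathGraph_adj.mpr (Or.inl (by simp [prev, last]; omega)))
        with h | h
      · exact ⟨prev, h⟩
      · exact has_in last prev h
    obtain ⟨x, hx⟩ := this
    have := Fin.isLt x
    exact ⟨last, mem_filter.mpr ⟨mem_univ _, x, by
      rcases adj_of_arc hx with h | h <;> simp [last] at h ⊢ <;> omega, hx⟩⟩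
  obtain ⟨m, hm, hmin⟩ := S.exists_min_image Fin.val hS
  obtain ⟨u, hum, hu⟩ := (mem_filter.mp hm).2
  obtain ⟨x, hx⟩ := has_in u m hu
  rcases adj_of_arc hx with h | h
  · have := hmin u (mem_filter.mpr ⟨mem_univ _, x, h, hx⟩)
    omega
  · obtain rfl : x = m := Fin.ext (by omega)
    exact (hA u x).2 ⟨hu, hx⟩

theorem card_dominators_add_card_colorClass_le [DecidableRel A]
    (hA : IsOrientation (pathGraph n) A) {i : Fin t} (hi : i ∈ dominatedColors A c) :
    #(dominators A (colorClass c i)) + #(colorClass c i) ≤ 3 := by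
  simp only [dominatedColors, mem_filter, mem_univ, true_and] at hi
  exact pathGraph_card_add_card_le_three hi.2 hi.1 fun v hv u hu =>
    (hA v u).1.mpr (Or.inl (mem_dominators.mp hv u hu))

theorem lower_bound_of_isDominatorColoring_pathGraph (hA : IsOrientation (pathGraph n) A)
    (hc : IsDominatorColoring A c) (hn : 4 ≤ n) :
    (n / 2 + 1) / 2 + 2 ≤ t ∨ n = 6 ∧ t = 3 := by
  classical
  set D := dominatedColors A c
  set R := undominatedVertices A c
  have h_sinks := pathGraph_two_mul_card_le_of_isIndepSet (sinks_isIndepSet hA)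
  have h_classes : #D ≤ ∑ i ∈ D, #(colorClass c i) := by
    simpa using D.card_nsmul_le_sum (fun i => #(colorClass c i)) 1 fun i hi =>
      card_pos.mpr (mem_filter.mp hi).2.1
  have h_nonsinks : #(sinks A)ᶜ + ∑ i ∈ D, #(colorClass c i) ≤ 3 * #D := calc
    _ ≤ ∑ i ∈ D, #(dominators A (colorClass c i)) + ∑ i ∈ D, #(colorClass c i) := by
      gcongr
      exact (card_le_card (compl_sinks_subset_biUnion_dominators hc)).trans card_biUnion_le
    _ = ∑ i ∈ D, (#(dominators A (colorClass c i)) + #(colorClass c i)) :=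
      sum_add_distrib.symm
    _ ≤ ∑ _i ∈ D, 3 := sum_le_sum fun i hi => card_dominators_add_card_colorClass_le hA hi
    _ = 3 * #D := by rw [sum_const, smul_eq_mul, mul_comm]
  have h_total : #R + ∑ i ∈ D, #(colorClass c i) = n := by
    simpa using card_undominatedVertices_add_sum_card_colorClass (A := A) (c := c)
  have h_colors : #D + #(R.image c) ≤ t := card_dominatedColors_add_card_image_le
  obtain ⟨w, hw_in, u, hwu⟩ := exists_source_of_isOrientation_pathGraph hA (by omega)
  have hwR : w ∈ R := mem_undominatedVertices_of_forall_not_adj hw_in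
  have h_image : 1 ≤ #(R.image c) := card_pos.mpr ⟨c w, mem_image_of_mem c hwR⟩
  have h_single : #(R.image c) = 1 → 2 * #R ≤ n + 1 ∧ #R + #(sinks A) ≤ n := by
    intro h_one
    obtain ⟨i, hi⟩ := card_eq_one.mp h_one
    have hR : (pathGraph n).IsIndepSet (R : Set (Fin n)) :=
      Set.Pairwise.mono (fun v hv => mem_coe.mpr <| mem_colorClass.mpr <| by
        simpa [hi] using mem_image_of_mem c (mem_coe.mp hv))
        (colorClass_isIndepSet hA hc i)
    have hw_sink : w ∉ sinks A := fun hw => mem_sinks.mp hw u hwu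
    exact ⟨pathGraph_two_mul_card_le_of_isIndepSet hR,
      pathGraph_card_add_card_le_of_isIndepSet hR (sinks_isIndepSet hA) hwR hw_sink⟩
  rw [card_compl, Fintype.card_fin] at h_nonsinks
  omega

end PathLowerBound

section PathUpperBound

def oddToEven (n : ℕ) (u v : Fin n) : Prop := (pathGraph n).Adj u v ∧ u.val % 2 = 1

theorem isOrientation_oddToEven (n : ℕ) : IsOrientation (pathGraph n) (oddToEven n) := by
  intro u v
  simp only [oddToEven, pathGraph_adj]
  omega

/-- Odd vertices get color `1` and even vertices color `0`, except that vertex `4 * j + 2`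
(or vertex `4 * j` if it is the penultimate one) forms the singleton class `j + 2`, which the
odd vertices `4 * j + 1` and `4 * j + 3` dominate. -/
def oddToEvenColoring (n : ℕ) (v : Fin n) : Fin ((n / 2 + 1) / 2 + 2) :=
  ⟨if v.val % 4 = 2 ∨ v.val % 4 = 0 ∧ v.val + 2 = n then v.val / 4 + 2 else v.val % 2, by
    split_ifs <;> omega⟩

theorem isDominatorColoring_oddToEvenColoring (n : ℕ) :
    IsDominatorColoring (oddToEven n) (oddToEvenColoring n) := by
  constructor
  · rintro u v ⟨huv, hu⟩ h
    rw [pathGraph_adj] at huv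
    simp only [oddToEvenColoring, Fin.mk.injEq] at h
    split_ifs at h <;> omega
  · rintro v ⟨-, -, hv⟩
    refine ⟨⟨v.val / 4 + 2, by omega⟩, ?_, fun u hu => ?_⟩
    · by_cases h : 4 * (v.val / 4) + 2 < n
      · exact ⟨⟨4 * (v.val / 4) + 2, h⟩, by simp [oddToEvenColoring]; omega⟩
      · refine ⟨⟨v.val - 1, by omega⟩, ?_⟩
        simp only [oddToEvenColoring, Fin.mk.injEq]
        split_ifs <;> omega
    · simp only [oddToEvenColoring, Fin.mk.injEq] at hu
      refine ⟨pathGraph_adj.mpr ?_, hv⟩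
      split_ifs at hu <;> omega

theorem isDominatorColoring_oddToEven_six :
    IsDominatorColoring (oddToEven 6)
      (fun v => if v = 4 then 2 else if v.val % 2 = 1 then 1 else (0 : Fin 3)) := by
  simp only [IsDominatorColoring, oddToEven, pathGraph_adj]
  decide

end PathUpperBound

theorem minOrientDomChrom_eq_of_forall {V : Type*} {G : SimpleGraph V} {m : ℕ}
    (h_exists : ∃ A, IsOrientation G A ∧ ∃ c : V → Fin m, IsDominatorColoring A c)
    (h_le : ∀ A, IsOrientation G A → ∀ {t} (c : V → Fin t), IsDominatorColoring A c → m ≤ t) :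
    minOrientDomChrom G = m :=
  le_antisymm (Nat.sInf_le h_exists)
    (le_csInf ⟨m, h_exists⟩ fun _ ⟨A, hA, c, hc⟩ => h_le A hA c hc)

theorem minOrientDomChrom_pathGraph {n : ℕ} (h4 : 4 ≤ n) (h6 : n ≠ 6) :
    minOrientDomChrom (pathGraph n) = (n / 2 + 1) / 2 + 2 :=
  minOrientDomChrom_eq_of_forall
    ⟨_, isOrientation_oddToEven n, _, isDominatorColoring_oddToEvenColoring n⟩
    fun _ hA _ _ hc => by
      have := lower_bound_of_isDominatorColoring_pathGraph hA hc h4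
      omega

theorem minOrientDomChrom_pathGraph_six : minOrientDomChrom (pathGraph 6) = 3 :=
  minOrientDomChrom_eq_of_forall
    ⟨_, isOrientation_oddToEven 6, _, isDominatorColoring_oddToEven_six⟩
    fun _ hA _ _ hc => by
      have := lower_bound_of_isDominatorColoring_pathGraph hA hc le_add_self
      omega

/-- For every `k ≥ 1`, the minimum dominator chromatic number over all
orientations of the path `P_n` satisfies `χ_d(P_{4k}) = χ_d(P_{4k+1}) = k+2` and
`χ_d(P_{4k+2}) = χ_d(P_{4k+3}) = k+3`, with the single exception `χ_d(P₆) = 3`. -/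
theorem minOrientDomChrom_path (k : ℕ) (hk : 1 ≤ k) :
    minOrientDomChrom (SimpleGraph.pathGraph (4 * k)) = k + 2 ∧
    minOrientDomChrom (SimpleGraph.pathGraph (4 * k + 1)) = k + 2 ∧
    (4 * k + 2 ≠ 6 → minOrientDomChrom (SimpleGraph.pathGraph (4 * k + 2)) = k + 3) ∧
    minOrientDomChrom (SimpleGraph.pathGraph (4 * k + 3)) = k + 3 ∧
    minOrientDomChrom (SimpleGraph.pathGraph 6) = 3 := by
  refine ⟨?_, ?_, fun h6 => ?_, ?_, minOrientDomChrom_pathGraph_six⟩ <;>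
    rw [minOrientDomChrom_pathGraph (by omega) (by omega)] <;> omega
end

section
/- For every n ≥ 3, the minimum dominator chromatic number over all orientations of the cycle C_n on n vertices equals ⌈n/4⌉ + 2 (equivalently, χ_d(C_n) = k+2 where n = 4k−i with i ∈ {0,1,2,3}), with the exceptions χ_d(C_4) = 2 and χ_d(C_5) = χ_d(C_6) = 3. -/
/-!
Upper bound: in a properly colored graph, orient each edge from the larger color to the smaller
one. A vertex then dominates the singleton class of any smaller-colored neighbor whose color is
private. On `C_n`, the vertices `≡ 1 (mod 4)` receive private colors and the others share two
more colors, which gives `⌈n/4⌉ + 2` colors.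

Lower bound: the sinks of an orientation are independent, so at least `⌈n/2⌉` vertices have an
out-neighbor, and each of them dominates some color class. Since `C_n` (`n ≥ 5`) has maximum degree
two and no 4-cycle, a dominated class and its dominators together have at most three vertices.
Hence, with `d` dominated and `t` undominated classes,
`⌈n/2⌉ + (vertices in dominated classes) ≤ 3d`, and every class, being independent, has at most
`⌊n/2⌋` vertices. If `t ≥ 2` this gives `2d ≥ ⌈n/2⌉`; if `t = 1` the dominated classes hold at
least `⌈n/2⌉` vertices, so `3d ≥ 2⌈n/2⌉`; if `t = 0` they hold all of them, so `3d ≥ n + ⌈n/2⌉`.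
For `n ≥ 7` each case gives `d + t ≥ ⌈n/4⌉ + 2`. The small cycles follow from their chromatic
number, and `C_6` from the fact that a two-coloring has classes of three vertices, too many to be
dominated.
-/

open Finset SimpleGraph

section General

variable {V : Type*} {G : SimpleGraph V} {A : V → V → Prop} {k : ℕ} {c : V → Fin k}

lemma IsOrientation.adj (hA : IsOrientation G A) {u v : V} (h : A u v) : G.Adj u v :=
  ((hA u v).1).2 (Or.inl h)

lemma IsDominatorColoring.ne_of_adj_s14 (hA : IsOrientation G A) (hc : IsDominatorColoring A c)
    {u v : V} (h : G.Adj u v) : c u ≠ c v := by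
  rcases ((hA u v).1).1 h with huv | hvu
  · exact hc.1 u v huv
  · exact (hc.1 v u hvu).symm

lemma IsDominatorColoring.chromaticNumber_le (hA : IsOrientation G A)
    (hc : IsDominatorColoring A c) : G.chromaticNumber ≤ k :=
  Colorable.chromaticNumber_le ⟨Coloring.mk c (hc.ne_of_adj_s14 hA)⟩

lemma IsOrientation.isIndepSet_sinks (hA : IsOrientation G A) :
    G.IsIndepSet {v | ¬∃ u, A v u} := by
  intro u hu v hv _ huv
  rcases ((hA u v).1).1 huv with h | h
  · exact hu ⟨v, h⟩
  · exact hv ⟨u, h⟩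

lemma IsDominatorColoring.isIndepSet_colorClass (hA : IsOrientation G A)
    (hc : IsDominatorColoring A c) (i : Fin k) : G.IsIndepSet {v | c v = i} :=
  fun _ hu _ hv _ huv => hc.ne_of_adj_s14 hA huv (hu.trans hv.symm)

def colorOrient (G : SimpleGraph V) (c : V → Fin k) (u v : V) : Prop :=
  G.Adj u v ∧ c v < c u

lemma isOrientation_colorOrient (hc : ∀ u v, G.Adj u v → c u ≠ c v) :
    IsOrientation G (colorOrient G c) := by
  refine fun u v => ⟨⟨fun h => ?_, ?_⟩, fun ⟨huv, hvu⟩ => lt_asymm huv.2 hvu.2⟩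
  · rcases lt_or_gt_of_ne (hc u v h) with hlt | hlt
    · exact Or.inr ⟨h.symm, hlt⟩
    · exact Or.inl ⟨h, hlt⟩
  · rintro (h | h)
    exacts [h.1, h.1.symm]

lemma isDominatorColoring_colorOrient
    (hprivate : ∀ v u, G.Adj v u → c u < c v →
      ∃ w, G.Adj v w ∧ c w < c v ∧ ∀ u, c u = c w → u = w) :
    IsDominatorColoring (colorOrient G c) c := by
  refine ⟨fun u v huv => huv.2.ne', fun v ⟨u, hvu⟩ => ?_⟩
  obtain ⟨w, hvw, hlt, hw⟩ := hprivate v u hvu.1 hvu.2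
  exact ⟨c w, ⟨w, rfl⟩, fun u hu => hw u hu ▸ ⟨hvw, hlt⟩⟩

lemma exists_dominatorColoring_of_colorOrient (c : V → Fin k) (hc : ∀ u v, G.Adj u v → c u ≠ c v)
    (hdom : IsDominatorColoring (colorOrient G c) c) :
    ∃ A, IsOrientation G A ∧ ∃ c : V → Fin k, IsDominatorColoring A c :=
  ⟨_, isOrientation_colorOrient hc, c, hdom⟩

lemma minOrientDomChrom_eq_of
    (hexists : ∃ A, IsOrientation G A ∧ ∃ c : V → Fin k, IsDominatorColoring A c)
    (hle : ∀ A, IsOrientation G A → ∀ m (c : V → Fin m), IsDominatorColoring A c → k ≤ m) :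
    minOrientDomChrom G = k :=
  le_antisymm (Nat.sInf_le hexists)
    (le_csInf ⟨k, hexists⟩ fun m ⟨A, hA, c, hc⟩ => hle A hA m c hc)

end General

section Counting

variable {V : Type*} [Fintype V] {G : SimpleGraph V} {A : V → V → Prop} {k : ℕ} {c : V → Fin k}

lemma card_le_two_of_forall_adj [DecidableRel G.Adj] (hdeg : G.maxDegree ≤ 2) {v : V} {s : Finset V}
    (h : ∀ u ∈ s, G.Adj v u) : #s ≤ 2 :=
  calc #s ≤ #(G.neighborFinset v) := card_le_card fun u hu => (G.mem_neighborFinset v u).2 (h u hu)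
    _ = G.degree v := G.card_neighborFinset_eq_degree v
    _ ≤ 2 := (G.degree_le_maxDegree v).trans hdeg

lemma card_add_card_le_three [DecidableRel G.Adj] (hdeg : G.maxDegree ≤ 2)
    (hcommon : ∀ v w, v ≠ w → (G.commonNeighbors v w).Subsingleton)
    {F S : Finset V} (hF : F.Nonempty) (hS : S.Nonempty) (hFS : ∀ v ∈ F, ∀ u ∈ S, G.Adj v u) :
    #F + #S ≤ 3 := by
  obtain ⟨v, hv⟩ := hF
  obtain ⟨u, hu⟩ := hS
  have hS2 : #S ≤ 2 := card_le_two_of_forall_adj hdeg (hFS v hv)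
  have hF2 : #F ≤ 2 := card_le_two_of_forall_adj hdeg fun w hw => (hFS w hw u hu).symm
  by_cases hS1 : #S ≤ 1
  · omega
  obtain ⟨x, hx, y, hy, hxy⟩ := one_lt_card.1 (not_le.1 hS1)
  have hF1 : #F ≤ 1 := card_le_one.2 fun a ha b hb =>
    hcommon x y hxy ((G.mem_commonNeighbors).2 ⟨(hFS a ha x hx).symm, (hFS a ha y hy).symm⟩)
      ((G.mem_commonNeighbors).2 ⟨(hFS b hb x hx).symm, (hFS b hb y hy).symm⟩)
  omega

lemma two_mul_card_colorClass_le
    (hindep : ∀ s : Finset V, G.IsIndepSet (s : Set V) → 2 * #s ≤ Fintype.card V)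
    (hA : IsOrientation G A) (hc : IsDominatorColoring A c) (i : Fin k) :
    2 * #{v | c v = i} ≤ Fintype.card V :=
  hindep _ (by simpa using hc.isIndepSet_colorClass hA i)

lemma sum_card_colorClass (c : V → Fin k) : ∑ i, #{v | c v = i} = Fintype.card V :=
  (card_eq_sum_card_fiberwise fun v _ => mem_univ (c v)).symm

lemma card_le_of_isDominatorColoring [DecidableRel G.Adj] (hdeg : G.maxDegree ≤ 2)
    (hindep : ∀ s : Finset V, G.IsIndepSet (s : Set V) → 2 * #s ≤ Fintype.card V)
    (hA : IsOrientation G A) (hc : IsDominatorColoring A c) {u v : V} (huv : G.Adj u v) :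
    Fintype.card V ≤ 2 + (k - 1) * (Fintype.card V / 2) := by
  obtain ⟨x, hx⟩ : ∃ x, ∃ y, A x y := by
    rcases ((hA u v).1).1 huv with h | h
    exacts [⟨u, v, h⟩, ⟨v, u, h⟩]
  obtain ⟨i, -, hi⟩ := hc.2 x hx
  have hdominated : #{v | c v = i} ≤ 2 :=
    card_le_two_of_forall_adj hdeg fun w hw => hA.adj (hi w (by simpa using hw))
  have hrest : ∑ j ∈ univ.erase i, #{v | c v = j} ≤ (k - 1) * (Fintype.card V / 2) :=
    calc _ ≤ #(univ.erase i) • (Fintype.card V / 2) := sum_le_card_nsmul _ _ _ fun j _ => by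
            have := two_mul_card_colorClass_le hindep hA hc j
            omega
      _ = _ := by simp [card_erase_of_mem]
  calc Fintype.card V = #{v | c v = i} + ∑ j ∈ univ.erase i, #{v | c v = j} := by
        rw [add_sum_erase _ (fun j => #{v | c v = j}) (mem_univ i), sum_card_colorClass]
    _ ≤ _ := add_le_add hdominated hrest

def DominatesColorClass (A : V → V → Prop) (c : V → Fin k) (v : V) (i : Fin k) : Prop :=
  (∃ u, c u = i) ∧ ∀ u, c u = i → A v u

open Classical in
lemma card_dominators_add_card_colorClass_le_three [DecidableRel G.Adj] (hdeg : G.maxDegree ≤ 2)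
    (hcommon : ∀ v w, v ≠ w → (G.commonNeighbors v w).Subsingleton) (hA : IsOrientation G A)
    {i : Fin k} {v : V} (hv : DominatesColorClass A c v i) :
    #{w | DominatesColorClass A c w i} + #{u | c u = i} ≤ 3 := by
  obtain ⟨u, hu⟩ := hv.1
  refine card_add_card_le_three hdeg hcommon ⟨v, by simpa using hv⟩ ⟨u, by simpa using hu⟩ ?_
  intro w hw u hu
  exact hA.adj ((mem_filter.1 hw).2.2 u (mem_filter.1 hu).2)

open Classical in
lemma card_nonSinks_add_sum_card_colorClass_le [DecidableRel G.Adj] (hdeg : G.maxDegree ≤ 2)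
    (hcommon : ∀ v w, v ≠ w → (G.commonNeighbors v w).Subsingleton)
    (hA : IsOrientation G A) (hc : IsDominatorColoring A c) :
    #{v | ∃ u, A v u} + ∑ i ∈ {i | ∃ v, DominatesColorClass A c v i}, #{u | c u = i} ≤
      3 * #{i | ∃ v, DominatesColorClass A c v i} := by
  set D : Finset (Fin k) := {i | ∃ v, DominatesColorClass A c v i}
  have hcover : #{v | ∃ u, A v u} ≤ ∑ i ∈ D, #{w | DominatesColorClass A c w i} := by
    refine (card_le_card fun v hv => ?_).trans card_biUnion_le
    obtain ⟨i, hi⟩ := hc.2 v (mem_filter.1 hv).2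
    exact mem_biUnion.2 ⟨i, mem_filter.2 ⟨mem_univ _, v, hi⟩, mem_filter.2 ⟨mem_univ _, hi⟩⟩
  have hpairs : ∑ i ∈ D, (#{w | DominatesColorClass A c w i} + #{u | c u = i}) ≤ 3 * #D := by
    rw [mul_comm, ← smul_eq_mul]
    refine sum_le_card_nsmul _ _ _ fun i hi => ?_
    obtain ⟨v, hv⟩ := (mem_filter.1 hi).2
    exact card_dominators_add_card_colorClass_le_three hdeg hcommon hA hv
  rw [sum_add_distrib] at hpairs
  omega

open Classical in
theorem add_two_le_of_isDominatorColoring [DecidableRel G.Adj] (hdeg : G.maxDegree ≤ 2)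
    (hcommon : ∀ v w, v ≠ w → (G.commonNeighbors v w).Subsingleton)
    (hindep : ∀ s : Finset V, G.IsIndepSet (s : Set V) → 2 * #s ≤ Fintype.card V)
    (hn : 7 ≤ Fintype.card V) (hA : IsOrientation G A) (hc : IsDominatorColoring A c) :
    (Fintype.card V + 3) / 4 + 2 ≤ k := by
  have hcount := card_nonSinks_add_sum_card_colorClass_le hdeg hcommon hA hc
  set n := Fintype.card V
  set NS : Finset V := {v | ∃ u, A v u}
  set D : Finset (Fin k) := {i | ∃ v, DominatesColorClass A c v i}
  have hsinks : n ≤ 2 * #NS := by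
    have := hindep NSᶜ (by simpa [NS, compl_filter] using hA.isIndepSet_sinks)
    have := card_add_card_compl NS
    omega
  have hnonempty : #D ≤ ∑ i ∈ D, #{u | c u = i} := by
    rw [card_eq_sum_ones]
    refine sum_le_sum fun i hi => card_pos.2 ?_
    obtain ⟨v, ⟨u, hu⟩, -⟩ := (mem_filter.1 hi).2
    exact ⟨u, by simpa using hu⟩
  have hsplit : ∑ i ∈ D, #{u | c u = i} + ∑ i ∈ Dᶜ, #{u | c u = i} = n := by
    rw [sum_add_sum_compl, sum_card_colorClass]
  have hundominated : 2 * ∑ i ∈ Dᶜ, #{u | c u = i} ≤ #Dᶜ * n := by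
    rw [mul_sum, ← smul_eq_mul]
    exact sum_le_card_nsmul _ _ _ fun i _ => two_mul_card_colorClass_le hindep hA hc i
  have hk : #D + #Dᶜ = k := by rw [card_add_card_compl, Fintype.card_fin]
  obtain h | h | h : #Dᶜ = 0 ∨ #Dᶜ = 1 ∨ 2 ≤ #Dᶜ := by omega
  · rw [h, zero_mul] at hundominated
    omega
  · rw [h, one_mul] at hundominated
    omega
  · omega

end Counting

section Cycle

variable {n : ℕ}

lemma cycleGraph_adj_iff_val (hn : 2 ≤ n) {u v : Fin n} :
    (cycleGraph n).Adj u v ↔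
      u.val + 1 = v.val ∨ v.val + 1 = u.val ∨ u.val + 1 = v.val + n ∨ v.val + 1 = u.val + n := by
  have key : ∀ a b : Fin n, (a - b).val = 1 ↔ a.val = b.val + 1 ∨ a.val + n = b.val + 1 := by
    intro a b
    rcases le_or_gt b a with h | h
    · rw [Fin.sub_val_of_le h]
      omega
    · rw [Fin.coe_sub_iff_lt.2 h]
      omega
  rw [cycleGraph_adj', key, key]
  omega

lemma cycleGraph_adj_add_one [NeZero n] (hn : 2 ≤ n) (v : Fin n) :
    (cycleGraph n).Adj v (v + 1) := by
  rw [cycleGraph_adj']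
  simp [Nat.mod_eq_of_lt hn]

lemma cycleGraph_maxDegree_le_two : (cycleGraph n).maxDegree ≤ 2 := by
  refine maxDegree_le_of_forall_degree_le _ 2 fun v => ?_
  rcases n with _ | _ | n
  · exact v.elim0
  · simp [cycleGraph_one_eq_bot]
  · rw [cycleGraph_degree_two_le]
    exact card_le_two

lemma cycleGraph_commonNeighbors_subsingleton (hn : 5 ≤ n) {v w : Fin n} (hvw : v ≠ w) :
    ((cycleGraph n).commonNeighbors v w).Subsingleton := by
  intro x hx y hy
  rw [mem_commonNeighbors, cycleGraph_adj_iff_val (by omega),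
    cycleGraph_adj_iff_val (by omega)] at hx hy
  rw [Ne, Fin.ext_iff] at hvw
  have := x.isLt; have := y.isLt; have := v.isLt; have := w.isLt
  exact Fin.ext (by omega)

lemma two_mul_card_le_of_isIndepSet_cycleGraph (hn : 2 ≤ n) {s : Finset (Fin n)}
    (hs : (cycleGraph n).IsIndepSet s) : 2 * #s ≤ n := by
  have : NeZero n := ⟨by omega⟩
  have hdisj : Disjoint s (s.map (addRightEmbedding 1)) := by
    refine disjoint_left.2 fun v hv hv' => ?_
    obtain ⟨u, hu, rfl⟩ := mem_map.1 hv'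
    have hadj := cycleGraph_adj_add_one hn u
    exact hs hu hv hadj.ne hadj
  calc 2 * #s = #(s ∪ s.map (addRightEmbedding 1)) := by
        rw [card_union_of_disjoint hdisj, card_map, two_mul]
    _ ≤ n := card_le_univ _ |>.trans (Fintype.card_fin n).le

end Cycle

section Construction

variable {n : ℕ}

/-- These vertices get pairwise distinct colors below `⌈n/4⌉ = (n + 3) / 4`; every other vertex
with a smaller-colored neighbor has one of them as a neighbor. -/
def IsPrivateVertex (n a : ℕ) : Prop :=
  a % 4 = 1 ∨ (n % 4 = 1 ∧ a = n - 2)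

-- `n - 1` shares the color of the vertices `≡ 3 (mod 4)` so that, for odd `n`, the edge from
-- `n - 1` to `0` stays properly colored.
def cycleColor (n a : ℕ) : ℕ :=
  if a % 4 = 1 then a / 4
  else if n % 4 = 1 ∧ a = n - 2 then (n + 3) / 4 - 1
  else if a % 4 = 3 ∨ a = n - 1 then (n + 3) / 4
  else (n + 3) / 4 + 1

lemma cycleColor_lt {a : ℕ} (ha : a < n) : cycleColor n a < (n + 3) / 4 + 2 := by
  unfold cycleColor
  split_ifs <;> omega

lemma cycleColor_lt_iff {a : ℕ} (ha : a < n) :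
    cycleColor n a < (n + 3) / 4 ↔ IsPrivateVertex n a := by
  unfold cycleColor IsPrivateVertex
  split_ifs <;> omega

lemma cycleColor_ne_of_adj (hn : 3 ≤ n) {u v : Fin n} (h : (cycleGraph n).Adj u v) :
    cycleColor n u ≠ cycleColor n v := by
  rw [cycleGraph_adj_iff_val (by omega)] at h
  have := u.isLt; have := v.isLt
  unfold cycleColor
  split_ifs <;> omega

lemma eq_of_cycleColor_eq_of_lt {u v : Fin n}
    (h : cycleColor n u = cycleColor n v) (hv : cycleColor n v < (n + 3) / 4) : u = v := by
  have := u.isLt; have := v.isLt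
  unfold cycleColor at h hv
  exact Fin.ext (by split_ifs at h hv <;> omega)

lemma not_isPrivateVertex_of_adj (hn : 3 ≤ n) {u v : Fin n} (h : (cycleGraph n).Adj u v)
    (hu : IsPrivateVertex n u) : ¬IsPrivateVertex n v := by
  rw [cycleGraph_adj_iff_val (by omega)] at h
  unfold IsPrivateVertex at *
  have := u.isLt; have := v.isLt
  omega

lemma exists_adj_cycleColor_lt (hn : 3 ≤ n) {v u : Fin n} (h : (cycleGraph n).Adj v u)
    (hlt : cycleColor n u < cycleColor n v) :
    ∃ w, (cycleGraph n).Adj v w ∧ cycleColor n w < (n + 3) / 4 ∧ cycleColor n w < cycleColor n v := by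
  have hv : (n + 3) / 4 ≤ cycleColor n v := by
    by_contra hv
    have hvp := (cycleColor_lt_iff v.isLt).1 (by omega)
    exact not_isPrivateVertex_of_adj hn h hvp ((cycleColor_lt_iff u.isLt).1 (by omega))
  have hvn : ¬IsPrivateVertex n v := (cycleColor_lt_iff v.isLt).not.1 (by omega)
  have h3 : v.val % 4 = 3 → IsPrivateVertex n u := by
    intro h3
    have : cycleColor n v = (n + 3) / 4 := by
      unfold cycleColor IsPrivateVertex at *
      split_ifs <;> omega
    exact (cycleColor_lt_iff u.isLt).1 (by omega)
  obtain ⟨w, hvw, hw⟩ : ∃ w, (cycleGraph n).Adj v w ∧ IsPrivateVertex n w := by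
    have := u.isLt
    simp only [cycleGraph_adj_iff_val (show 2 ≤ n by omega), IsPrivateVertex] at h hvn h3 ⊢
    by_cases hv0 : v.val % 4 = 0 ∧ v.val + 1 < n
    · exact ⟨⟨v + 1, hv0.2⟩, by simp only [true_or, true_and]; omega⟩
    · exact ⟨⟨v - 1, by omega⟩, by simp only; omega⟩
  have := (cycleColor_lt_iff w.isLt).2 hw
  exact ⟨w, hvw, this, by omega⟩

lemma exists_dominatorColoring_cycleGraph (hn : 3 ≤ n) :
    ∃ A, IsOrientation (cycleGraph n) A ∧
      ∃ c : Fin n → Fin ((n + 3) / 4 + 2), IsDominatorColoring A c := by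
  let c : Fin n → Fin ((n + 3) / 4 + 2) := fun v => ⟨cycleColor n v, cycleColor_lt v.isLt⟩
  refine exists_dominatorColoring_of_colorOrient c
    (fun u v h he => cycleColor_ne_of_adj hn h (congrArg Fin.val he))
    (isDominatorColoring_colorOrient fun v u h hlt => ?_)
  obtain ⟨w, hvw, hprivate, hwv⟩ := exists_adj_cycleColor_lt hn h hlt
  exact ⟨w, hvw, hwv, fun u hu => eq_of_cycleColor_eq_of_lt (congrArg Fin.val hu) hprivate⟩

end Construction

section CycleBounds

variable {n k : ℕ} {A : Fin n → Fin n → Prop} {c : Fin n → Fin k}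

lemma add_two_le_of_isDominatorColoring_cycleGraph (hn : 7 ≤ n)
    (hA : IsOrientation (cycleGraph n) A) (hc : IsDominatorColoring A c) :
    (n + 3) / 4 + 2 ≤ k := by
  simpa using add_two_le_of_isDominatorColoring cycleGraph_maxDegree_le_two
    (fun _ _ => cycleGraph_commonNeighbors_subsingleton (by omega))
    (fun _ hs => by simpa using two_mul_card_le_of_isIndepSet_cycleGraph (by omega) hs)
    (by simpa using hn) hA hc

lemma three_le_of_isDominatorColoring_cycleGraph_of_odd (hn : 2 ≤ n) (hodd : Odd n)
    (hA : IsOrientation (cycleGraph n) A) (hc : IsDominatorColoring A c) : 3 ≤ k := by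
  have := hc.chromaticNumber_le hA
  rw [chromaticNumber_cycleGraph_of_odd n hn hodd] at this
  exact_mod_cast this

lemma two_le_of_isDominatorColoring_cycleGraph (hn : 2 ≤ n) (heven : Even n)
    (hA : IsOrientation (cycleGraph n) A) (hc : IsDominatorColoring A c) : 2 ≤ k := by
  have := hc.chromaticNumber_le hA
  rw [chromaticNumber_cycleGraph_of_even n hn heven] at this
  exact_mod_cast this

lemma three_le_of_isDominatorColoring_cycleGraph_six {A : Fin 6 → Fin 6 → Prop} {c : Fin 6 → Fin k}
    (hA : IsOrientation (cycleGraph 6) A) (hc : IsDominatorColoring A c) : 3 ≤ k := by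
  have := card_le_of_isDominatorColoring cycleGraph_maxDegree_le_two
    (fun _ hs => by simpa using two_mul_card_le_of_isIndepSet_cycleGraph (by omega) hs) hA hc
    (cycleGraph_adj_add_one (by omega) 0)
  simp only [Fintype.card_fin] at this
  omega

end CycleBounds

lemma exists_dominatorColoring_cycleGraph_four :
    ∃ A, IsOrientation (cycleGraph 4) A ∧ ∃ c : Fin 4 → Fin 2, IsDominatorColoring A c :=
  exists_dominatorColoring_of_colorOrient ![1, 0, 1, 0] (by decide)
    (by unfold IsDominatorColoring colorOrient; decide)

lemma exists_dominatorColoring_cycleGraph_five :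
    ∃ A, IsOrientation (cycleGraph 5) A ∧ ∃ c : Fin 5 → Fin 3, IsDominatorColoring A c :=
  exists_dominatorColoring_of_colorOrient ![1, 0, 2, 1, 2] (by decide)
    (by unfold IsDominatorColoring colorOrient; decide)

lemma exists_dominatorColoring_cycleGraph_six :
    ∃ A, IsOrientation (cycleGraph 6) A ∧ ∃ c : Fin 6 → Fin 3, IsDominatorColoring A c :=
  exists_dominatorColoring_of_colorOrient ![2, 0, 2, 1, 2, 0] (by decide)
    (by unfold IsDominatorColoring colorOrient; decide)

/-- For every `n ≥ 3`, the minimum dominator chromatic number over all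
orientations of the cycle `C_n` equals `⌈n/4⌉ + 2`, with the exceptions
`χ_d(C₄) = 2` and `χ_d(C₅) = χ_d(C₆) = 3`. -/
theorem minOrientDomChrom_cycle (n : ℕ) (hn : 3 ≤ n) :
    (n ≠ 4 → n ≠ 5 → n ≠ 6 →
      minOrientDomChrom (SimpleGraph.cycleGraph n) = (n + 3) / 4 + 2) ∧
    minOrientDomChrom (SimpleGraph.cycleGraph 4) = 2 ∧
    minOrientDomChrom (SimpleGraph.cycleGraph 5) = 3 ∧
    minOrientDomChrom (SimpleGraph.cycleGraph 6) = 3 := by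
  refine ⟨fun h4 h5 h6 => ?_, ?_, ?_, ?_⟩
  · refine minOrientDomChrom_eq_of (exists_dominatorColoring_cycleGraph hn) fun A hA m c hc => ?_
    obtain rfl | h7 : n = 3 ∨ 7 ≤ n := by omega
    · exact three_le_of_isDominatorColoring_cycleGraph_of_odd (by norm_num) (by decide) hA hc
    · exact add_two_le_of_isDominatorColoring_cycleGraph h7 hA hc
  · exact minOrientDomChrom_eq_of exists_dominatorColoring_cycleGraph_four fun A hA m c hc =>
      two_le_of_isDominatorColoring_cycleGraph (by norm_num) (by decide) hA hc
  · exact minOrientDomChrom_eq_of exists_dominatorColoring_cycleGraph_five fun A hA m c hc =>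
      three_le_of_isDominatorColoring_cycleGraph_of_odd (by norm_num) (by decide) hA hc
  · exact minOrientDomChrom_eq_of exists_dominatorColoring_cycleGraph_six fun A hA m c hc =>
      three_le_of_isDominatorColoring_cycleGraph_six hA hc
end
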